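/- arXiv:2502.15548 — 2 statements merged into one kernel-verified Lean document; each statement's English description precedes it below -/
import Mathlib

section
/- Let β, k ∈ ℂ with β ≠ 0, and suppose E, H : ℝ³ → ℂ³ are smooth fields of the form E = e^{iβx} Ê(y,z), H = e^{iβx} Ĥ(y,z) with Ĥ_x = 0, satisfying curl E = iωμ H and curl H = -iωε E with k² = εμω². Then ((curl E) × n) × n = i(k²/β)(E × n), where n = (1,0,0). -/
open Matrix Complex

noncomputable def pd (i : Fin 3) (f : (Fin 3 → ℝ) → ℂ) (x : Fin 3 → ℝ) : ℂ :=
  fderiv ℝ f x (Pi.single i 1)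

noncomputable def curl (E : (Fin 3 → ℝ) → Fin 3 → ℂ) (x : Fin 3 → ℝ) : Fin 3 → ℂ :=
  ![pd 1 (fun p => E p 2) x - pd 2 (fun p => E p 1) x,
    pd 2 (fun p => E p 0) x - pd 0 (fun p => E p 2) x,
    pd 0 (fun p => E p 1) x - pd 1 (fun p => E p 0) x]

lemma pd_zero_fun (i : Fin 3) (f : (Fin 3 → ℝ) → ℂ) (h : ∀ p, f p = 0) (p : Fin 3 → ℝ) :
    pd i f p = 0 := by
  have : f = fun _ => 0 := funext h
  simp [pd, this]

lemma pd0_exp (β : ℂ) (f : (Fin 3 → ℝ) → ℂ) (g : ℝ → ℝ → ℂ)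
    (hf : Differentiable ℝ f)
    (hform : ∀ p, f p = Complex.exp (I * β * p 0) * g (p 1) (p 2))
    (p : Fin 3 → ℝ) : pd 0 f p = I * β * f p := by
  set v : Fin 3 → ℝ := Pi.single 0 1 with hv
  have hline : HasDerivAt (fun t : ℝ => p + t • v) v 0 := by
    simpa using ((hasDerivAt_id (0:ℝ)).smul_const v).const_add p
  have h1 : HasDerivAt (fun t : ℝ => f (p + t • v)) (fderiv ℝ f p v) 0 := by
    have := HasFDerivAt.comp_hasDerivAt (x := (0:ℝ)) (by simpa using (hf p).hasFDerivAt) hline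
    exact this
  have heq : (fun t : ℝ => f (p + t • v)) =
      fun t : ℝ => Complex.exp (I * β * ((p 0 : ℂ) + (t : ℂ))) * g (p 1) (p 2) := by
    funext t
    rw [hform]
    have h0 : (p + t • v) 0 = p 0 + t := by simp [hv]
    have h1' : (p + t • v) 1 = p 1 := by simp [hv, Pi.single_apply]
    have h2' : (p + t • v) 2 = p 2 := by simp [hv, Pi.single_apply]
    rw [h0, h1', h2']
    push_cast
    ring_nf
  have hinner : HasDerivAt (fun t : ℝ => I * β * ((p 0 : ℂ) + (t : ℂ))) (I * β) 0 := by
    have hc : HasDerivAt (fun t : ℝ => (t : ℂ)) 1 0 := by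
      exact Complex.ofRealCLM.hasDerivAt (x := (0:ℝ))
    simpa using (hc.const_add ((p 0 : ℂ))).const_mul (I * β)
  have h3 : HasDerivAt (fun t : ℝ => Complex.exp (I * β * ((p 0 : ℂ) + (t : ℂ))) * g (p 1) (p 2))
      (I * β * Complex.exp (I * β * (p 0 : ℂ)) * g (p 1) (p 2)) 0 := by
    have := (hinner.cexp).mul_const (g (p 1) (p 2))
    simpa [mul_comm, mul_assoc, mul_left_comm] using this
  rw [heq] at h1
  have := h1.unique h3
  rw [pd, ← hv, this, hform p]
  ring

theorem TM_mode_boundary_operator (β k ε μ ω : ℂ) (hβ : β ≠ 0)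
    (hk : k ^ 2 = ε * μ * ω ^ 2)
    (E H : (Fin 3 → ℝ) → Fin 3 → ℂ)
    (Ehat Hhat : ℝ → ℝ → Fin 3 → ℂ)
    (hformE : ∀ p : Fin 3 → ℝ, E p = Complex.exp (I * β * p 0) • Ehat (p 1) (p 2))
    (hformH : ∀ p : Fin 3 → ℝ, H p = Complex.exp (I * β * p 0) • Hhat (p 1) (p 2))
    (hHx : ∀ y z : ℝ, Hhat y z 0 = 0)
    (hsmoothE : ∀ i : Fin 3, ContDiff ℝ (⊤ : ℕ∞) (fun p => E p i))
    (hsmoothH : ∀ i : Fin 3, ContDiff ℝ (⊤ : ℕ∞) (fun p => H p i))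
    (hMaxwell1 : ∀ p : Fin 3 → ℝ, curl E p = (I * ω * μ) • H p)
    (hMaxwell2 : ∀ p : Fin 3 → ℝ, curl H p = (-(I * ω * ε)) • E p) :
    ∀ p : Fin 3 → ℝ,
      crossProduct (crossProduct (curl E p) ![1, 0, 0]) ![1, 0, 0]
        = (I * (k ^ 2 / β)) • crossProduct (E p) ![1, 0, 0] := by
  intro p
  have hH0 : ∀ q, H q 0 = 0 := by
    intro q; rw [hformH]; simp [hHx]
  have hpdH1 : pd 0 (fun q => H q 1) p = I * β * H p 1 :=
    pd0_exp β _ (fun y z => Hhat y z 1) ((hsmoothH 1).differentiable (by simp))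
      (fun q => by rw [hformH]; simp) p
  have hpdH2 : pd 0 (fun q => H q 2) p = I * β * H p 2 :=
    pd0_exp β _ (fun y z => Hhat y z 2) ((hsmoothH 2).differentiable (by simp))
      (fun q => by rw [hformH]; simp) p
  have hM2 := hMaxwell2 p
  have eq1 : I * β * H p 2 = I * ω * ε * E p 1 := by
    have := congrFun hM2 1
    simp only [curl, Matrix.cons_val_one, Matrix.head_cons, Matrix.cons_val_zero, Pi.smul_apply, smul_eq_mul] at this
    rw [pd_zero_fun 2 _ hH0, hpdH2] at this
    linear_combination -this
  have eq2 : I * β * H p 1 = -(I * ω * ε * E p 2) := by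
    have := congrFun hM2 2
    simp only [curl, Matrix.cons_val_two, Matrix.tail_cons, Matrix.head_cons,
      Pi.smul_apply, smul_eq_mul] at this
    rw [pd_zero_fun 1 _ hH0, hpdH1] at this
    linear_combination this
  have eq1' : β * H p 2 = ω * ε * E p 1 := by
    apply mul_left_cancel₀ Complex.I_ne_zero
    linear_combination eq1
  have eq2' : β * H p 1 = -(ω * ε * E p 2) := by
    apply mul_left_cancel₀ Complex.I_ne_zero
    linear_combination eq2
  have hM1 := hMaxwell1 p
  rw [hM1]
  funext i
  fin_cases i <;>
    simp [cross_apply, Pi.smul_apply, smul_eq_mul, hH0]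
  · field_simp
    linear_combination (-(ω * μ)) * eq2' - (E p 2) * hk
  · field_simp
    linear_combination (ω * μ) * eq1' - (E p 1) * hk
end

section
/- Let a, b ∈ ℂ and define the 2×2 matrices K⁺ := [[0,0],[a,b]] and K⁻ := [[b,a],[0,0]]. For N ≥ 1, let I_N be the 2N×2N block tridiagonal matrix with zero diagonal blocks, superdiagonal blocks K⁺ and subdiagonal blocks K⁻. If a = 0, then I_N^N = 0 (the iteration matrix is nilpotent of index at most N). -/
/-!
For `a = 0` the blocks reduce to `K⁺ = [[0,0],[0,b]]` and `K⁻ = [[b,0],[0,0]]`, so the iteration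
matrix only moves the first component of subdomain `i` to subdomain `i - 1` and the second
component to subdomain `i + 1`. The potential `i` on first components and `N - 1 - i` on second
components thus strictly decreases along every nonzero entry; as it takes values in `[0, N)`,
no product of `N` entries can be nonzero.
-/

open Matrix

/-- The `2N × 2N` block tridiagonal Schwarz iteration matrix with zero diagonal blocks,
superdiagonal blocks `K⁺ = [[0,0],[a,b]]` and subdiagonal blocks `K⁻ = [[b,a],[0,0]]`. -/
noncomputable def schwarzIter (N : ℕ) (a b : ℂ) :
    Matrix (Fin N × Fin 2) (Fin N × Fin 2) ℂ := fun p q =>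
  if (q.1 : ℕ) = (p.1 : ℕ) + 1 then (Matrix.of ![![(0 : ℂ), 0], ![a, b]]) p.2 q.2
  else if (q.1 : ℕ) + 1 = (p.1 : ℕ) then (Matrix.of ![![b, (a : ℂ)], ![0, 0]]) p.2 q.2
  else 0

namespace Matrix

variable {ι R : Type*} [Fintype ι] [DecidableEq ι] [Semiring R] {A : Matrix ι ι R} {f : ι → ℕ}

theorem pow_apply_eq_zero_of_lt_add (hA : ∀ i j, A i j ≠ 0 → f j < f i) (k : ℕ) :
    ∀ i j, f i < f j + k → (A ^ k) i j = 0 := by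
  induction k with
  | zero =>
    intro i j hij
    rw [pow_zero, one_apply_ne]
    rintro rfl
    omega
  | succ k ih =>
    intro i j hij
    rw [pow_succ', mul_apply]
    refine Finset.sum_eq_zero fun l _ => ?_
    by_cases hil : A i l = 0
    · rw [hil, zero_mul]
    · rw [ih l j (by have := hA i l hil; omega), mul_zero]

theorem pow_eq_zero_of_lt (hA : ∀ i j, A i j ≠ 0 → f j < f i) {n : ℕ} (hf : ∀ i, f i < n) :
    A ^ n = 0 := by
  ext i j
  exact pow_apply_eq_zero_of_lt_add hA n i j (by have := hf i; omega)

end Matrix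

def schwarzWeight (N : ℕ) (p : Fin N × Fin 2) : ℕ :=
  if p.2 = 0 then p.1 else N - 1 - p.1

theorem schwarzWeight_lt (N : ℕ) (p : Fin N × Fin 2) : schwarzWeight N p < N := by
  have := p.1.isLt
  unfold schwarzWeight
  split_ifs <;> omega

theorem schwarzWeight_lt_of_schwarzIter_ne_zero {N : ℕ} {b : ℂ} {p q : Fin N × Fin 2}
    (h : schwarzIter N 0 b p q ≠ 0) : schwarzWeight N q < schwarzWeight N p := by
  obtain ⟨⟨i, hi⟩, s⟩ := p
  obtain ⟨⟨j, hj⟩, t⟩ := q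
  unfold schwarzIter at h
  split_ifs at h with hup hdown <;>
    fin_cases s <;> fin_cases t <;> simp_all [schwarzWeight] <;> omega

theorem schwarzIter_nilpotent_general (N : ℕ) (b : ℂ) :
    schwarzIter N 0 b ^ N = 0 :=
  pow_eq_zero_of_lt (f := schwarzWeight N) (fun _ _ => schwarzWeight_lt_of_schwarzIter_ne_zero)
    (schwarzWeight_lt N)

theorem schwarzIter_nilpotent (N : ℕ) (hN : 1 ≤ N) (b : ℂ) :
    schwarzIter N 0 b ^ N = 0 :=
  schwarzIter_nilpotent_general N b
end
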